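/- arXiv:2501.15565 — 2 statements merged into one kernel-verified Lean document; each statement's English description precedes it below -/
import Mathlib

section
/- Let Φ, Ψ be Young functions in Δ₂ and p ∈ (1,∞). If limsup_{x→0⁺} Ψ(x)/Φ(x) = ∞, then L^{p,Φ} ⊄ L^{p,Ψ}: there exists a nonincreasing function f on [0,∞) with ∫₀^∞ Φ(t^{1/p} f(t)) dt/t < ∞ but ∫₀^∞ Ψ(t^{1/p} f(t)) dt/t = ∞. -/
open MeasureTheory Real Set Filter Topology ENNReal

noncomputable section

/-- Lebesgue measure restricted to `[0,∞)`. -/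
def mu0 : Measure ℝ := volume.restrict (Ici 0)

/-- The dilation operator `D_r f (t) = f (r t)`. -/
def dil (r : ℝ) (f : ℝ → ℝ) : ℝ → ℝ := fun t => f (r * t)

/-- The nonincreasing rearrangement `f^*`. -/
def rearr (f : ℝ → ℝ) (t : ℝ) : ℝ :=
  sInf {s : ℝ | 0 < s ∧ mu0 {x | s < |f x|} ≤ ENNReal.ofReal t}

/-- The Hardy–Littlewood maximal function `f^{**} (t) = t⁻¹ ∫_0^t f^*`. -/
def maxf (f : ℝ → ℝ) (t : ℝ) : ℝ := (∫ s in Ioc (0:ℝ) t, rearr f s) / t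

/-- A rearrangement-invariant Banach function norm over `([0,∞), λ)`,
axioms (P1)–(P6) of Bennett–Sharpley. -/
structure RINorm where
  N : (ℝ → ℝ) → ℝ≥0∞
  triangle : ∀ f g, N (f + g) ≤ N f + N g
  smul : ∀ (a : ℝ) (f : ℝ → ℝ), N (fun t => a * f t) = ENNReal.ofReal |a| * N f
  zero_iff : ∀ f, N f = 0 ↔ f =ᵐ[mu0] 0
  mono : ∀ f g, (∀ᵐ x ∂mu0, |g x| ≤ |f x|) → N g ≤ N f
  fatou : ∀ (fn : ℕ → ℝ → ℝ) (f : ℝ → ℝ),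
      (∀ n, ∀ᵐ x ∂mu0, 0 ≤ fn n x ∧ fn n x ≤ fn (n + 1) x) →
      (∀ᵐ x ∂mu0, Tendsto (fun n => fn n x) atTop (nhds (f x))) →
      Tendsto (fun n => N (fn n)) atTop (nhds (N f))
  finite_ind : ∀ E : Set ℝ, MeasurableSet E → mu0 E < ⊤ →
      N (Set.indicator E fun _ => (1:ℝ)) < ⊤
  loc_int : ∀ E : Set ℝ, MeasurableSet E → mu0 E < ⊤ →
      ∃ C : ℝ≥0∞, C ≠ ⊤ ∧ ∀ f : ℝ → ℝ,
        (∫⁻ x in E, ENNReal.ofReal |f x| ∂mu0) ≤ C * N f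
  rearr_inv : ∀ f g, rearr f = rearr g → N f = N g

/-- If `limsup_{x→0⁺} Ψ(x)/Φ(x) = ∞`, then `L^{p,Φ} ⊄ L^{p,Ψ}`: a nonincreasing `f`
separates the two Orlicz–Lorentz classes. -/
theorem stmt18 (Φ Ψ : ℝ → ℝ)
    (hconvΦ : ConvexOn ℝ (Ici 0) Φ) (hmonoΦ : StrictMonoOn Φ (Ici 0)) (h0Φ : Φ 0 = 0)
    (hconvΨ : ConvexOn ℝ (Ici 0) Ψ) (hmonoΨ : StrictMonoOn Ψ (Ici 0)) (h0Ψ : Ψ 0 = 0)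
    (hΔΦ : ∃ K : ℝ, 0 < K ∧ ∀ x : ℝ, 0 < x → Φ (2 * x) ≤ K * Φ x)
    (hΔΨ : ∃ K : ℝ, 0 < K ∧ ∀ x : ℝ, 0 < x → Ψ (2 * x) ≤ K * Ψ x)
    (p : ℝ) (hp1 : 1 < p)
    (hlimsup : ∀ M T : ℝ, 0 < M → 0 < T → ∃ x ∈ Ioo (0:ℝ) T, M * Φ x < Ψ x) :
    ∃ f : ℝ → ℝ, AntitoneOn f (Ici 0) ∧
      (∫⁻ t in Ioi (0:ℝ), ENNReal.ofReal (Φ (t ^ (1 / p) * f t) / t)) < ⊤ ∧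
      (∫⁻ t in Ioi (0:ℝ), ENNReal.ofReal (Ψ (t ^ (1 / p) * f t) / t)) = ⊤ := by
  classical
  set q : ℝ := 1 / p with hqdef
  have hq0 : 0 < q := by rw [hqdef]; positivity
  -- choose the sequence x
  have key : ∀ (j : ℕ) (T : ℝ), 0 < T → ∃ y, y ∈ Ioo 0 T ∧ ((j:ℝ)+1) * Φ y < Ψ y := by
    intro j T hT
    obtain ⟨y, hy, h⟩ := hlimsup ((j:ℝ)+1) T (by positivity) hT
    exact ⟨y, hy, h⟩
  choose! F hF1 hF2 using key
  set x : ℕ → ℝ := fun n => Nat.rec (F 0 1) (fun j prev => F (j+1) (min prev ((2:ℝ)⁻¹^(j+1)))) n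
    with hxdef
  have hx0 : x 0 = F 0 1 := rfl
  have hxsucc : ∀ j, x (j+1) = F (j+1) (min (x j) ((2:ℝ)⁻¹^(j+1))) := fun j => rfl
  have hxpb : ∀ j, 0 < x j ∧ x j ≤ (2:ℝ)⁻¹ ^ j := by
    intro j
    induction j with
    | zero =>
      have h := hF1 0 1 one_pos
      exact ⟨h.1, by rw [hx0]; simpa using h.2.le⟩
    | succ j ih =>
      have hm : 0 < min (x j) ((2:ℝ)⁻¹^(j+1)) := lt_min ih.1 (by positivity)
      have h := hF1 (j+1) _ hm
      rw [hxsucc]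
      exact ⟨h.1, h.2.le.trans (min_le_right _ _)⟩
  have hxpos : ∀ j, 0 < x j := fun j => (hxpb j).1
  have hxanti : Antitone x := by
    apply antitone_nat_of_succ_le
    intro j
    have hm : 0 < min (x j) ((2:ℝ)⁻¹^(j+1)) := lt_min (hxpos j) (by positivity)
    have h := hF1 (j+1) _ hm
    rw [hxsucc]
    exact h.2.le.trans (min_le_left _ _)
  have hΨx : ∀ j : ℕ, ((j:ℝ)+1) * Φ (x j) < Ψ (x j) := by
    intro j
    cases j with
    | zero => rw [hx0]; simpa using hF2 0 1 one_pos
    | succ j =>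
      have hm : 0 < min (x j) ((2:ℝ)⁻¹^(j+1)) := lt_min (hxpos j) (by positivity)
      have := hF2 (j+1) _ hm
      rw [hxsucc]
      exact_mod_cast this
  have hΦnn : ∀ y : ℝ, 0 ≤ y → 0 ≤ Φ y := by
    intro y hy
    have := hmonoΦ.monotoneOn (mem_Ici.2 le_rfl) (mem_Ici.2 hy) hy
    simpa [h0Φ] using this
  have hΨnn : ∀ y : ℝ, 0 ≤ y → 0 ≤ Ψ y := by
    intro y hy
    have := hmonoΨ.monotoneOn (mem_Ici.2 le_rfl) (mem_Ici.2 hy) hy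
    simpa [h0Ψ] using this
  have hΦxpos : ∀ j, 0 < Φ (x j) := by
    intro j
    have := hmonoΦ (mem_Ici.2 le_rfl) (mem_Ici.2 (hxpos j).le) (hxpos j)
    simpa [h0Φ] using this
  -- the lengths, partial sums, endpoints
  set L : ℕ → ℝ := fun j => 1/(((j:ℝ)+1)^2 * Φ (x j)) + 1 with hLdef
  have hL1 : ∀ j, 1 ≤ L j := by
    intro j
    have hp := hΦxpos j
    have : 0 < 1/(((j:ℝ)+1)^2 * Φ (x j)) := by positivity
    simp only [hLdef]; linarith
  set S : ℕ → ℝ := fun n => ∑ i ∈ Finset.range n, L i with hSdef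
  set a : ℕ → ℝ := fun j => Real.exp (S j) with hadef
  have hS0 : S 0 = 0 := by simp [hSdef]
  have ha0 : a 0 = 1 := by simp [hadef, hS0]
  have hapos : ∀ j, 0 < a j := fun j => Real.exp_pos _
  have haS : ∀ j, S (j+1) = S j + L j := fun j => Finset.sum_range_succ _ _
  have hSmono : Monotone S := by
    apply monotone_nat_of_le_succ
    intro j
    rw [haS]
    linarith [hL1 j]
  have hamono : Monotone a := fun i j hij => Real.exp_le_exp.2 (hSmono hij)
  have ha1le : ∀ j, 1 ≤ a j := fun j => ha0 ▸ hamono (Nat.zero_le j)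
  have hSge : ∀ j : ℕ, (j:ℝ) ≤ S j := by
    intro j
    induction j with
    | zero => simp [hS0]
    | succ j ih =>
      rw [haS]
      push_cast
      linarith [hL1 j]
  have hexJ : ∀ t : ℝ, ∃ j : ℕ, t ≤ a (j+1) := by
    intro t
    obtain ⟨n, hn⟩ := exists_nat_ge t
    refine ⟨n, hn.trans ?_⟩
    have h1 : ((n:ℝ)+1) ≤ S (n+1) := by exact_mod_cast hSge (n+1)
    have h2 := Real.add_one_le_exp (S (n+1))
    simp only [hadef]
    linarith
  set J : ℝ → ℕ := fun t => Nat.find (hexJ t) with hJdef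
  have hJ1 : ∀ t, t ≤ a (J t + 1) := fun t => Nat.find_spec (hexJ t)
  have hJmin : ∀ (t : ℝ) (m : ℕ), m < J t → ¬ t ≤ a (m+1) := fun t m hm =>
    Nat.find_min (hexJ t) hm
  have hJ2 : ∀ t, 1 < t → a (J t) < t := by
    intro t ht
    rcases Nat.eq_zero_or_pos (J t) with h | h
    · rw [h, ha0]; exact ht
    · have hmin := hJmin t (J t - 1) (by omega)
      have heq : J t - 1 + 1 = J t := by omega
      rw [heq] at hmin
      exact lt_of_not_ge hmin
  have hJle : ∀ s t : ℝ, s ≤ t → J s ≤ J t := fun s t hst => Nat.find_le (hst.trans (hJ1 t))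
  have hJeq : ∀ (j : ℕ) (t : ℝ), a j < t → t ≤ a (j+1) → J t = j := by
    intro j t h1 h2
    have hle : J t ≤ j := Nat.find_le h2
    rcases lt_or_eq_of_le hle with h | h
    · exfalso
      exact not_le.2 h1 ((hJ1 t).trans (hamono (by omega : J t + 1 ≤ j)))
    · exact h
  -- the function
  set f : ℝ → ℝ := fun t => if t ≤ 1 then x 0 else x (J t) * t ^ (-q) with hfdef
  -- antitone helpers
  have hrne : ∀ u v : ℝ, 0 < u → u ≤ v → v ^ (-q) ≤ u ^ (-q) := fun u v hu huv =>
    Real.rpow_le_rpow_of_nonpos hu huv (neg_nonpos.2 hq0.le)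
  have hG : ∀ i j : ℕ, i ≤ j → x j * a j ^ (-q) ≤ x i * a i ^ (-q) := by
    intro i j hij
    have h2 : a j ^ (-q) ≤ a i ^ (-q) := hrne _ _ (hapos i) (hamono hij)
    have h3 : (0:ℝ) ≤ a j ^ (-q) := (Real.rpow_pos_of_pos (hapos j) _).le
    exact mul_le_mul (hxanti hij) h2 h3 (hxpos i).le
  have hf_anti : AntitoneOn f (Ici 0) := by
    intro s hs t ht hst
    by_cases hts : t ≤ 1
    · simp [hfdef, hts, hst.trans hts]
    · push_neg at hts
      have hft : f t = x (J t) * t ^ (-q) := by simp [hfdef, not_le.2 hts]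
      by_cases hss : s ≤ 1
      · rw [hft]
        simp only [hfdef, if_pos hss]
        calc x (J t) * t ^ (-q) ≤ x (J t) * 1 :=
              mul_le_mul_of_nonneg_left
                (Real.rpow_le_one_of_one_le_of_nonpos hts.le (neg_nonpos.2 hq0.le))
                (hxpos _).le
          _ ≤ x 0 := by rw [mul_one]; exact hxanti (Nat.zero_le _)
      · push_neg at hss
        have hspos : (0:ℝ) < s := lt_trans one_pos hss
        have hfs : f s = x (J s) * s ^ (-q) := by simp [hfdef, not_le.2 hss]
        rw [hft, hfs]
        rcases eq_or_lt_of_le (hJle s t hst) with hJ | hJ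
        · rw [← hJ]
          exact mul_le_mul_of_nonneg_left (hrne s t hspos hst) (hxpos _).le
        · calc x (J t) * t ^ (-q) ≤ x (J t) * a (J t) ^ (-q) :=
                mul_le_mul_of_nonneg_left (hrne (a (J t)) t (hapos _) (hJ2 t hts).le) (hxpos _).le
            _ ≤ x (J s + 1) * a (J s + 1) ^ (-q) := hG _ _ hJ
            _ ≤ x (J s) * a (J s + 1) ^ (-q) :=
                mul_le_mul_of_nonneg_right (hxanti (Nat.le_succ _))
                  (Real.rpow_pos_of_pos (hapos _) _).le
            _ ≤ x (J s) * s ^ (-q) :=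
                mul_le_mul_of_nonneg_left (hrne s (a (J s + 1)) hspos (hJ1 s)) (hxpos _).le
  -- basic integral computation on Ioc A B of c/t
  have hIoc : ∀ A B c : ℝ, 0 < A → A ≤ B → 0 ≤ c →
      ∫⁻ t in Ioc A B, ENNReal.ofReal (c / t) = ENNReal.ofReal (c * Real.log (B / A)) := by
    intro A B c hA hAB hc
    have hcont : ContinuousOn (fun t : ℝ => c / t) (Icc A B) := by
      apply ContinuousOn.div continuousOn_const continuousOn_id
      intro t ht
      exact ne_of_gt (lt_of_lt_of_le hA ht.1)
    have hint : IntegrableOn (fun t : ℝ => c / t) (Ioc A B) volume :=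
      (hcont.integrableOn_Icc).mono_set Ioc_subset_Icc_self
    have hnn : 0 ≤ᵐ[volume.restrict (Ioc A B)] fun t : ℝ => c / t := by
      filter_upwards [ae_restrict_mem measurableSet_Ioc] with t ht
      exact div_nonneg hc (le_of_lt (hA.trans_le ht.1.le))
    rw [← ofReal_integral_eq_lintegral_ofReal hint hnn]
    congr 1
    rw [← intervalIntegral.integral_of_le hAB]
    have h0 : (0:ℝ) ∉ Set.uIcc A B := by
      rw [Set.uIcc_of_le hAB]
      rintro ⟨h1, h2⟩
      linarith
    calc ∫ t in A..B, c / t = ∫ t in A..B, c * (1 / t) := by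
          congr 1; ext t; rw [mul_one_div]
      _ = c * ∫ t in A..B, 1 / t := intervalIntegral.integral_const_mul _ _
      _ = c * Real.log (B / A) := by rw [integral_one_div h0]
  -- the integrand on each interval
  have hIocval : ∀ (j : ℕ) (g : ℝ → ℝ),
      (∫⁻ t in Ioc (a j) (a (j+1)), ENNReal.ofReal (g (t ^ q * f t) / t))
        = ∫⁻ t in Ioc (a j) (a (j+1)), ENNReal.ofReal (g (x j) / t) := by
    intro j g
    apply setLIntegral_congr_fun measurableSet_Ioc
    intro t ht
    beta_reduce
    have ht1 : 1 < t := lt_of_le_of_lt (ha1le j) ht.1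
    have htpos : (0:ℝ) < t := one_pos.trans ht1
    have hJt : J t = j := hJeq j t ht.1 ht.2
    have hfteq : f t = x j * t ^ (-q) := by simp [hfdef, not_le.2 ht1, hJt]
    rw [hfteq]
    have harg : t ^ q * (x j * t ^ (-q)) = x j := by
      rw [mul_comm (x j), ← mul_assoc, ← Real.rpow_add htpos]
      simp
    rw [harg]
  have hlog : ∀ j : ℕ, Real.log (a (j+1) / a j) = L j := by
    intro j
    rw [Real.log_div (ne_of_gt (hapos _)) (ne_of_gt (hapos _))]
    simp only [hadef, Real.log_exp]
    rw [haS]; ring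
  -- decomposition of Ioi 1
  have hUnion : Ioi (1:ℝ) = ⋃ j : ℕ, Ioc (a j) (a (j+1)) := by
    ext t
    simp only [mem_Ioi, mem_iUnion, mem_Ioc]
    constructor
    · intro ht
      exact ⟨J t, hJ2 t ht, hJ1 t⟩
    · rintro ⟨j, h1, h2⟩
      exact lt_of_le_of_lt (ha1le j) h1
  have hdisj : Pairwise (Function.onFun Disjoint fun j : ℕ => Ioc (a j) (a (j+1))) := by
    have hkey : ∀ i j : ℕ, i < j → Disjoint (Ioc (a i) (a (i+1))) (Ioc (a j) (a (j+1))) := by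
      intro i j hij
      rw [Set.Ioc_disjoint_Ioc]
      exact le_trans (min_le_left _ _) (le_trans (hamono (by omega : i + 1 ≤ j)) (le_max_right _ _))
    intro i j hij
    rcases lt_or_gt_of_ne hij with h | h
    · exact hkey i j h
    · exact (hkey j i h).symm
  have hdisj01 : Disjoint (Ioc (0:ℝ) 1) (Ioi (1:ℝ)) := by
    rw [Set.disjoint_left]
    rintro t ⟨_, h1⟩ h2
    exact absurd h1 (not_le.2 h2)
  -- Φ piece on (0,1]
  have hx0le1 : x 0 ≤ 1 := by simpa using (hxpb 0).2
  have hconvbound : ∀ (g : ℝ → ℝ), ConvexOn ℝ (Ici 0) g → g 0 = 0 →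
      ∀ θ y : ℝ, 0 ≤ θ → θ ≤ 1 → 0 ≤ y → g (θ * y) ≤ θ * g y := by
    intro g hconv hg0 θ y hθ0 hθ1 hy
    have h := hconv.2 (mem_Ici.2 hy) (mem_Ici.2 le_rfl) hθ0 (sub_nonneg.2 hθ1) (by ring : θ + (1 - θ) = 1)
    simpa [hg0, smul_eq_mul] using h
  have hpiece1 : (∫⁻ t in Ioc (0:ℝ) 1, ENNReal.ofReal (Φ (t ^ q * f t) / t)) < ⊤ := by
    have hmono1 : (∫⁻ t in Ioc (0:ℝ) 1, ENNReal.ofReal (Φ (t ^ q * f t) / t))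
        ≤ ∫⁻ t in Ioc (0:ℝ) 1, ENNReal.ofReal (Φ (x 0) * t ^ (q - 1)) := by
      apply lintegral_mono_ae
      filter_upwards [ae_restrict_mem measurableSet_Ioc] with t ht
      apply ENNReal.ofReal_le_ofReal
      have htq1 : t ^ q ≤ 1 := Real.rpow_le_one ht.1.le ht.2 hq0.le
      have htq0 : (0:ℝ) ≤ t ^ q := Real.rpow_nonneg ht.1.le q
      have hft : f t = x 0 := by simp [hfdef, ht.2]
      rw [hft]
      have h2 : Φ (t ^ q * x 0) ≤ t ^ q * Φ (x 0) :=
        hconvbound Φ hconvΦ h0Φ _ _ htq0 htq1 (hxpos 0).le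
      have h3 : Φ (t ^ q * x 0) / t ≤ t ^ q * Φ (x 0) / t := (div_le_div_iff_of_pos_right ht.1).2 h2
      refine h3.trans (le_of_eq ?_)
      rw [Real.rpow_sub ht.1, Real.rpow_one]
      ring
    refine lt_of_le_of_lt hmono1 ?_
    have hint : IntegrableOn (fun t : ℝ => Φ (x 0) * t ^ (q - 1)) (Ioc (0:ℝ) 1) volume := by
      have h1 : IntervalIntegrable (fun t : ℝ => t ^ (q - 1)) volume 0 1 :=
        intervalIntegral.intervalIntegrable_rpow' (by linarith)
      have h2 := (intervalIntegrable_iff.1 h1)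
      rw [Set.uIoc_of_le (zero_le_one)] at h2
      exact h2.const_mul _
    exact hint.lintegral_lt_top
  -- value of the Φ integral on each interval
  have hΦj : ∀ j : ℕ, (∫⁻ t in Ioc (a j) (a (j+1)), ENNReal.ofReal (Φ (t ^ q * f t) / t))
      = ENNReal.ofReal (1/(((j:ℝ)+1)^2) + Φ (x j)) := by
    intro j
    rw [hIocval j Φ, hIoc _ _ _ (hapos j) (hamono (Nat.le_succ j)) (hΦnn _ (hxpos j).le), hlog]
    congr 1
    have hne : Φ (x j) ≠ 0 := ne_of_gt (hΦxpos j)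
    have hne2 : ((j:ℝ)+1) ≠ 0 := by positivity
    simp only [hLdef]
    field_simp
  have hΨjge : ∀ j : ℕ, ENNReal.ofReal (1/((j:ℝ)+1))
      ≤ ∫⁻ t in Ioc (a j) (a (j+1)), ENNReal.ofReal (Ψ (t ^ q * f t) / t) := by
    intro j
    rw [hIocval j Ψ, hIoc _ _ _ (hapos j) (hamono (Nat.le_succ j)) (hΨnn _ (hxpos j).le), hlog]
    apply ENNReal.ofReal_le_ofReal
    have hp := hΦxpos j
    have hA : (0:ℝ) < 1/(((j:ℝ)+1)^2 * Φ (x j)) := by positivity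
    have h1 : ((j:ℝ)+1) * Φ (x j) ≤ Ψ (x j) := (hΨx j).le
    have h2 : ((j:ℝ)+1) * Φ (x j) * (1/(((j:ℝ)+1)^2 * Φ (x j))) = 1/((j:ℝ)+1) := by
      have hne : Φ (x j) ≠ 0 := ne_of_gt (hΦxpos j)
      have hne2 : ((j:ℝ)+1) ≠ 0 := by positivity
      field_simp
    have h3 : Ψ (x j) * (1/(((j:ℝ)+1)^2 * Φ (x j))) ≥ 1/((j:ℝ)+1) := by
      rw [← h2]
      exact mul_le_mul_of_nonneg_right h1 hA.le
    have h4 : (0:ℝ) ≤ Ψ (x j) := hΨnn _ (hxpos j).le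
    simp only [hLdef]
    nlinarith
  -- summability for the Φ side
  have hsummable : Summable (fun j : ℕ => 1/(((j:ℝ)+1)^2) + Φ (x j)) := by
    apply Summable.add
    · have h1 : Summable (fun n : ℕ => 1 / (n:ℝ) ^ 2) := summable_one_div_nat_pow.2 one_lt_two
      have h2 := (summable_nat_add_iff 1).2 h1
      apply h2.congr
      intro j
      push_cast
      ring
    · refine Summable.of_nonneg_of_le (fun j => hΦnn _ (hxpos j).le)
        (fun j => ?_) (summable_geometric_two.mul_left (Φ 1))
      · have hb : Φ (x j) ≤ x j * Φ 1 := by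
          have := hconvbound Φ hconvΦ h0Φ (x j) 1 (hxpos j).le
            ((hxpb j).2.trans (pow_le_one₀ (by norm_num) (by norm_num))) zero_le_one
          simpa using this
        refine hb.trans ?_
        have : x j ≤ (1/2:ℝ)^j := by
          have := (hxpb j).2
          rwa [show ((2:ℝ)⁻¹ ^ j) = (1/2:ℝ)^j by norm_num] at this
        calc x j * Φ 1 ≤ (1/2:ℝ)^j * Φ 1 :=
              mul_le_mul_of_nonneg_right this (hΦnn 1 zero_le_one)
          _ = Φ 1 * (1/2:ℝ)^j := by ring
  have hnn2 : ∀ j : ℕ, 0 ≤ 1/(((j:ℝ)+1)^2) + Φ (x j) := by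
    intro j
    have := hΦnn _ (hxpos j).le
    positivity
  -- harmonic divergence
  have hΨtop : (∑' j : ℕ, ENNReal.ofReal (1/((j:ℝ)+1))) = ⊤ := by
    by_contra h
    have hs := ENNReal.summable_toReal h
    have heq : (fun j : ℕ => (ENNReal.ofReal (1/((j:ℝ)+1))).toReal)
        = fun j : ℕ => 1/((j:ℝ)+1) := by
      funext j
      exact ENNReal.toReal_ofReal (by positivity)
    rw [heq] at hs
    have hs2 : Summable (fun n : ℕ => 1 / ((n:ℝ) + 1)) := hs
    have hs3 : Summable (fun n : ℕ => (fun m : ℕ => 1 / (m:ℝ)) (n + 1)) := by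
      apply hs2.congr
      intro n
      push_cast
      ring
    exact not_summable_one_div_natCast ((summable_nat_add_iff 1).1 hs3)
  refine ⟨f, hf_anti, ?_, ?_⟩
  · -- Φ integral is finite
    rw [← Ioc_union_Ioi_eq_Ioi (zero_le_one : (0:ℝ) ≤ 1),
      lintegral_union measurableSet_Ioi hdisj01, hUnion,
      lintegral_iUnion (fun j => measurableSet_Ioc) hdisj]
    apply ENNReal.add_lt_top.2
    refine ⟨hpiece1, ?_⟩
    rw [tsum_congr hΦj, ← ENNReal.ofReal_tsum_of_nonneg hnn2 hsummable]
    exact ENNReal.ofReal_lt_top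
  · -- Ψ integral is infinite
    have h1 : (⊤:ℝ≥0∞) ≤ ∫⁻ t in Ioi (1:ℝ), ENNReal.ofReal (Ψ (t ^ q * f t) / t) := by
      rw [hUnion, lintegral_iUnion (fun j => measurableSet_Ioc) hdisj]
      calc (⊤:ℝ≥0∞) = ∑' j : ℕ, ENNReal.ofReal (1/((j:ℝ)+1)) := hΨtop.symm
        _ ≤ _ := ENNReal.tsum_le_tsum hΨjge
    have h2 : (∫⁻ t in Ioi (1:ℝ), ENNReal.ofReal (Ψ (t ^ q * f t) / t))
        ≤ ∫⁻ t in Ioi (0:ℝ), ENNReal.ofReal (Ψ (t ^ q * f t) / t) :=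
      lintegral_mono_set (Ioi_subset_Ioi zero_le_one)
    exact top_le_iff.1 (h1.trans h2)
end
end

section
/- Define Φ(x) = x^{4 + sin(log(-log x))} for x ∈ (0, e⁻¹], Φ(0) = 0, and extend affinely for x > e⁻¹ with matching value and derivative at e⁻¹. Then Φ is convex and increasing on [0,∞), satisfies the Δ₂ condition, and for every q ∈ (3,5) both limsup_{x→0⁺} Φ(x)/x^q = ∞ and limsup_{x→0⁺} x^q/Φ(x) = ∞ hold. -/
open MeasureTheory Real Set Filter Topology ENNReal

noncomputable section

/-- The Young function `Φ(x) = x^{4 + sin log(-log x)}` near zero, extended affinely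
(with matching value and derivative at `e⁻¹`). -/
def PhiEx (x : ℝ) : ℝ :=
  if x ≤ 0 then 0
  else if x ≤ (Real.exp 1)⁻¹ then x ^ (4 + Real.sin (Real.log (-Real.log x)))
  else 5 * Real.exp (-3) * x - 4 * Real.exp (-4)

namespace S19


def lx (x : ℝ) : ℝ := Real.log (-Real.log x)
def g (x : ℝ) : ℝ := 4 + Real.sin (lx x)
def phi (x : ℝ) : ℝ := x ^ (g x)
def h (x : ℝ) : ℝ := 4 + Real.sin (lx x) + Real.cos (lx x)
def phi' (x : ℝ) : ℝ := phi x * h x / x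
def phi'' (x : ℝ) : ℝ :=
  phi x / x ^ 2 * (h x ^ 2 - h x + (Real.cos (lx x) - Real.sin (lx x)) / Real.log x)

lemma log_neg' {x : ℝ} (h0 : 0 < x) (h1 : x < 1) : Real.log x < 0 :=
  Real.log_neg h0 h1

lemma hasDerivAt_lx {x : ℝ} (h0 : 0 < x) (h1 : x < 1) :
    HasDerivAt lx (1 / (x * Real.log x)) x := by
  have hlog : Real.log x < 0 := Real.log_neg h0 h1
  have h1' : HasDerivAt (fun y : ℝ => -Real.log y) (-x⁻¹) x :=
    (Real.hasDerivAt_log h0.ne').neg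
  have h2 : HasDerivAt Real.log (-Real.log x)⁻¹ (-Real.log x) :=
    Real.hasDerivAt_log (by linarith)
  have := h2.comp x h1'
  refine this.congr_deriv ?_
  field_simp [h0.ne', hlog.ne]

lemma hasDerivAt_g {x : ℝ} (h0 : 0 < x) (h1 : x < 1) :
    HasDerivAt g (Real.cos (lx x) * (1 / (x * Real.log x))) x := by
  have := ((Real.hasDerivAt_sin (lx x)).comp x (hasDerivAt_lx h0 h1)).const_add 4
  exact this

lemma hasDerivAt_phi {x : ℝ} (h0 : 0 < x) (h1 : x < 1) :
    HasDerivAt phi (phi' x) x := by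
  have hlog : Real.log x < 0 := Real.log_neg h0 h1
  have hL : HasDerivAt (fun y : ℝ => Real.log y * g y)
      (x⁻¹ * g x + Real.log x * (Real.cos (lx x) * (1 / (x * Real.log x)))) x :=
    (Real.hasDerivAt_log h0.ne').mul (hasDerivAt_g h0 h1)
  have hE : HasDerivAt (fun y : ℝ => Real.exp (Real.log y * g y))
      (Real.exp (Real.log x * g x) *
        (x⁻¹ * g x + Real.log x * (Real.cos (lx x) * (1 / (x * Real.log x))))) x :=
    (Real.hasDerivAt_exp _).comp x hL
  have heq : phi =ᶠ[𝓝 x] fun y => Real.exp (Real.log y * g y) := by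
    filter_upwards [eventually_gt_nhds h0] with y hy
    rw [phi, Real.rpow_def_of_pos hy]
  have := hE.congr_of_eventuallyEq heq
  refine this.congr_deriv ?_
  rw [phi', phi, Real.rpow_def_of_pos h0, h, g]
  field_simp [h0.ne', hlog.ne]

lemma hasDerivAt_h {x : ℝ} (h0 : 0 < x) (h1 : x < 1) :
    HasDerivAt h ((Real.cos (lx x) - Real.sin (lx x)) * (1 / (x * Real.log x))) x := by
  have hs := ((Real.hasDerivAt_sin (lx x)).comp x (hasDerivAt_lx h0 h1)).const_add 4
  have hc := (Real.hasDerivAt_cos (lx x)).comp x (hasDerivAt_lx h0 h1)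
  have := hs.add hc
  refine this.congr_deriv ?_
  ring

lemma hasDerivAt_phi' {x : ℝ} (h0 : 0 < x) (h1 : x < 1) :
    HasDerivAt phi' (phi'' x) x := by
  have hlog : Real.log x < 0 := Real.log_neg h0 h1
  have hnum := (hasDerivAt_phi h0 h1).mul (hasDerivAt_h h0 h1)
  have hdiv := hnum.div (hasDerivAt_id x) h0.ne'
  have heq : phi' = fun y => phi y * h y / y := rfl
  rw [heq]
  refine hdiv.congr_deriv ?_
  rw [phi'', phi', id_eq, Pi.mul_apply]
  field_simp [h0.ne', hlog.ne]
  ring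



def ci : ℝ := (Real.exp 1)⁻¹

lemma ci_eq : ci = Real.exp (-1) := by rw [ci, ← Real.exp_neg]
lemma ci_pos : 0 < ci := by rw [ci_eq]; exact Real.exp_pos _
lemma ci_lt_one : ci < 1 := by
  rw [ci_eq, ← Real.exp_zero]; exact Real.exp_lt_exp.mpr (by norm_num)

lemma lx_ci : lx ci = 0 := by
  rw [lx, ci_eq, Real.log_exp]; norm_num
lemma phi_ci : phi ci = Real.exp (-4) := by
  rw [phi, g, lx_ci, Real.sin_zero, add_zero, ci_eq,
    Real.rpow_def_of_pos (Real.exp_pos _), Real.log_exp]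
  norm_num
lemma h_ci : h ci = 5 := by rw [h, lx_ci]; norm_num
lemma phi'_ci : phi' ci = 5 * Real.exp (-3) := by
  rw [phi', phi_ci, h_ci, ci_eq, mul_comm, mul_div_assoc, ← Real.exp_sub]
  norm_num

lemma sc_sq (x : ℝ) : Real.sin (lx x) ^ 2 + Real.cos (lx x) ^ 2 = 1 :=
  Real.sin_sq_add_cos_sq _

lemma h_ge_two (x : ℝ) : 2 ≤ h x := by
  have := Real.neg_one_le_sin (lx x)
  have := Real.neg_one_le_cos (lx x)
  rw [h]; linarith

lemma key_ineq (s c t : ℝ) (hsc : s ^ 2 + c ^ 2 = 1) (ht1 : -1 ≤ t) (ht0 : t ≤ 0) :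
    0 < (4 + s + c) ^ 2 - (4 + s + c) + (c - s) * t := by
  nlinarith [sq_nonneg (s + c), sq_nonneg (c - s), sq_nonneg (c - s + t), sq_nonneg (c - s - t), sq_nonneg t, sq_nonneg (s + c + 3/2)]

lemma phi_pos {x : ℝ} (h0 : 0 < x) : 0 < phi x := Real.rpow_pos_of_pos h0 _

lemma phi''_pos {x : ℝ} (h0 : 0 < x) (h1 : x ≤ ci) :
    0 < phi x / x ^ 2 * (h x ^ 2 - h x + (Real.cos (lx x) - Real.sin (lx x)) / Real.log x) := by
  have hlog : Real.log x ≤ -1 := by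
    calc Real.log x ≤ Real.log ci := Real.log_le_log h0 h1
    _ = -1 := by rw [ci_eq, Real.log_exp]
  have hlogneg : Real.log x < 0 := by linarith
  have htl : (Real.log x)⁻¹ * Real.log x = 1 := inv_mul_cancel₀ hlogneg.ne
  have ht0 : (Real.log x)⁻¹ < 0 := inv_lt_zero.mpr hlogneg
  have ht1 : -1 ≤ (Real.log x)⁻¹ := by nlinarith
  have hx2 : 0 < phi x / x ^ 2 := div_pos (phi_pos h0) (by positivity)
  have hkey := key_ineq (Real.sin (lx x)) (Real.cos (lx x)) (Real.log x)⁻¹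
    (sc_sq x) ht1 ht0.le
  have : (Real.cos (lx x) - Real.sin (lx x)) / Real.log x
      = (Real.cos (lx x) - Real.sin (lx x)) * (Real.log x)⁻¹ := div_eq_mul_inv _ _
  rw [this, h]
  exact mul_pos hx2 hkey

def lin (x : ℝ) : ℝ := 5 * Real.exp (-3) * x - 4 * Real.exp (-4)








lemma phiEx_eq_phi {x : ℝ} (h0 : 0 < x) (h1 : x ≤ ci) : PhiEx x = phi x := by
  rw [ci] at h1
  rw [PhiEx, if_neg (by linarith), if_pos h1]; rfl

lemma lin_ci : lin ci = Real.exp (-4) := by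
  rw [lin, ci_eq, mul_assoc, ← Real.exp_add, show (-3:ℝ) + -1 = -4 by norm_num]; ring

lemma phiEx_eq_lin {x : ℝ} (h1 : ci ≤ x) : PhiEx x = lin x := by
  rcases eq_or_lt_of_le h1 with rfl | hlt
  · rw [phiEx_eq_phi ci_pos le_rfl, phi_ci, lin_ci]
  · rw [PhiEx, if_neg (by nlinarith [ci_pos]), if_neg (by rw [← ci]; linarith)]; rfl

lemma hasDerivAt_phiEx_ci : HasDerivAt PhiEx (5 * Real.exp (-3)) ci := by
  have hleft : HasDerivWithinAt PhiEx (5 * Real.exp (-3)) (Iic ci) ci := by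
    have h1 : HasDerivWithinAt phi (5 * Real.exp (-3)) (Iic ci) ci := by
      rw [← phi'_ci]; exact (hasDerivAt_phi ci_pos ci_lt_one).hasDerivWithinAt
    refine h1.congr_of_eventuallyEq ?_ (phiEx_eq_phi ci_pos le_rfl)
    filter_upwards [self_mem_nhdsWithin,
      (eventually_gt_nhds ci_pos).filter_mono nhdsWithin_le_nhds] with y hy1 hy2
    exact phiEx_eq_phi hy2 hy1
  have hright : HasDerivWithinAt PhiEx (5 * Real.exp (-3)) (Ici ci) ci := by
    have h1 : HasDerivWithinAt lin (5 * Real.exp (-3)) (Ici ci) ci := by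
      have := ((((hasDerivAt_id ci).const_mul (5 * Real.exp (-3))).sub_const
        (4 * Real.exp (-4))).hasDerivWithinAt (s := Ici ci))
      simp only [id_eq, mul_one] at this; exact this
    exact h1.congr (fun y hy => phiEx_eq_lin hy) (phiEx_eq_lin le_rfl)
  have := hleft.union hright
  rw [Iic_union_Ici] at this
  exact this.hasDerivAt (by simp)

def D (x : ℝ) : ℝ := if x ≤ ci then phi' x else 5 * Real.exp (-3)

lemma hasDerivAt_PhiEx {x : ℝ} (h0 : 0 < x) : HasDerivAt PhiEx (D x) x := by
  rcases lt_trichotomy x ci with hlt | rfl | hgt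
  · rw [D, if_pos hlt.le]
    have heq : PhiEx =ᶠ[𝓝 x] phi := by
      filter_upwards [Ioo_mem_nhds h0 hlt] with y hy
      exact phiEx_eq_phi hy.1 hy.2.le
    exact (hasDerivAt_phi h0 (hlt.trans ci_lt_one)).congr_of_eventuallyEq heq
  · rw [D, if_pos le_rfl, phi'_ci]; exact hasDerivAt_phiEx_ci
  · rw [D, if_neg (not_le.mpr hgt)]
    have heq : PhiEx =ᶠ[𝓝 x] lin := by
      filter_upwards [eventually_gt_nhds hgt] with y hy
      exact phiEx_eq_lin hy.le
    have h1 : HasDerivAt lin (5 * Real.exp (-3)) x := by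
      have := ((hasDerivAt_id x).const_mul (5 * Real.exp (-3))).sub_const
        (4 * Real.exp (-4))
      simp only [id_eq, mul_one] at this; exact this
    exact h1.congr_of_eventuallyEq heq













lemma g_ge_three (x : ℝ) : 3 ≤ g x := by
  have := Real.neg_one_le_sin (lx x); rw [g]; linarith
lemma g_le_five (x : ℝ) : g x ≤ 5 := by
  have := Real.sin_le_one (lx x); rw [g]; linarith

lemma phiEx_le_cube {x : ℝ} (h0 : 0 ≤ x) (h1 : x ≤ ci) : PhiEx x ≤ x ^ 3 := by
  rcases eq_or_lt_of_le h0 with rfl | hx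
  · rw [PhiEx, if_pos le_rfl]; norm_num
  · rw [phiEx_eq_phi hx h1, phi, show x ^ 3 = x ^ (3:ℝ) by
      rw [show ((3:ℝ)) = ((3:ℕ):ℝ) by norm_num, Real.rpow_natCast]]
    exact Real.rpow_le_rpow_of_exponent_ge hx (h1.trans ci_lt_one.le) (g_ge_three x)

lemma phiEx_nonneg {x : ℝ} : 0 ≤ PhiEx x := by
  rcases le_or_gt x 0 with hx | hx
  · rw [PhiEx, if_pos hx]
  · rcases le_or_gt x ci with h1 | h1
    · rw [phiEx_eq_phi hx h1]; exact (phi_pos hx).le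
    · rw [PhiEx, if_neg (not_le.mpr hx), if_neg (by rw [← ci]; exact not_le.mpr h1)]
      have hprod : Real.exp (-3) * Real.exp (-1) = Real.exp (-4) := by
        rw [← Real.exp_add]; norm_num
      have hci : ci = Real.exp (-1) := by rw [ci, ← Real.exp_neg]
      rw [hci] at h1
      nlinarith [Real.exp_pos (-3:ℝ), Real.exp_pos (-4:ℝ), Real.exp_pos (-1:ℝ)]

lemma contOn : ContinuousOn PhiEx (Ici 0) := by
  intro x hx
  rcases eq_or_lt_of_le (Set.mem_Ici.mp hx) with rfl | hx0
  · have h0 : PhiEx 0 = 0 := by rw [PhiEx, if_pos le_rfl]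
    rw [ContinuousWithinAt, h0]
    apply squeeze_zero'
    · exact Filter.Eventually.of_forall fun y => phiEx_nonneg
    · filter_upwards [inter_mem_nhdsWithin (Ici 0)
        (Iio_mem_nhds ci_pos : Iio ci ∈ 𝓝 (0:ℝ))] with y hy
      exact phiEx_le_cube hy.1 hy.2.le
    · have : Tendsto (fun y : ℝ => y ^ 3) (𝓝 0) (𝓝 0) :=
        (continuous_pow 3).tendsto' 0 0 (by norm_num)
      exact this.mono_left nhdsWithin_le_nhds
  · exact (hasDerivAt_PhiEx hx0).continuousAt.continuousWithinAt

lemma monoD : MonotoneOn D (Ioi 0) := by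
  have hmono : StrictMonoOn phi' (Ioc 0 ci) := by
    apply strictMonoOn_of_deriv_pos (convex_Ioc 0 ci)
    · intro y hy
      exact (hasDerivAt_phi' hy.1 (hy.2.trans_lt ci_lt_one)).continuousAt.continuousWithinAt
    · rw [interior_Ioc]
      intro y hy
      rw [(hasDerivAt_phi' hy.1 (hy.2.trans ci_lt_one)).deriv]
      rw [phi'']
      exact phi''_pos hy.1 hy.2.le
  intro x hx y hy hxy
  rcases le_or_gt x ci with hxc | hxc
  · rcases le_or_gt y ci with hyc | hyc
    · rw [D, if_pos hxc, D, if_pos hyc]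
      exact hmono.monotoneOn ⟨hx, hxc⟩ ⟨hy, hyc⟩ hxy
    · rw [D, if_pos hxc, D, if_neg (not_le.mpr hyc), ← phi'_ci]
      exact hmono.monotoneOn ⟨hx, hxc⟩ ⟨ci_pos, le_rfl⟩ hxc
  · rw [D, if_neg (not_le.mpr hxc), D, if_neg (not_le.mpr (hxc.trans_le hxy))]

lemma D_pos {x : ℝ} (hx : 0 < x) : 0 < D x := by
  rw [D]; split
  · rw [phi']
    exact div_pos (mul_pos (phi_pos hx) (by linarith [h_ge_two x])) hx
  · positivity

lemma deriv_PhiEx {x : ℝ} (hx : 0 < x) : deriv PhiEx x = D x :=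
  (hasDerivAt_PhiEx hx).deriv

lemma convexPhiEx : ConvexOn ℝ (Ici 0) PhiEx := by
  apply MonotoneOn.convexOn_of_deriv (convex_Ici 0) contOn
  · rw [interior_Ici]
    exact fun x hx => (hasDerivAt_PhiEx hx).differentiableAt.differentiableWithinAt
  · rw [interior_Ici]
    intro x hx y hy hxy
    rw [deriv_PhiEx hx, deriv_PhiEx hy]
    exact monoD hx hy hxy

lemma strictMonoPhiEx : StrictMonoOn PhiEx (Ici 0) := by
  apply strictMonoOn_of_deriv_pos (convex_Ici 0) contOn
  rw [interior_Ici]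
  intro x hx
  rw [deriv_PhiEx hx]
  exact D_pos hx











lemma sin_lip (a b : ℝ) : |Real.sin a - Real.sin b| ≤ |a - b| := by
  rw [Real.sin_sub_sin, abs_mul, abs_mul, abs_two]
  have h1 : |Real.sin ((a - b)/2)| ≤ |(a - b)/2| := Real.abs_sin_le_abs
  have h2 : |Real.cos ((a + b)/2)| ≤ 1 := Real.abs_cos_le_one _
  have h3 : |(a - b)/2| = |a - b|/2 := by rw [abs_div, abs_two]
  nlinarith [abs_nonneg (Real.sin ((a - b)/2)), abs_nonneg ((a-b)/2), abs_nonneg (a-b),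
    abs_nonneg (Real.cos ((a + b)/2))]

lemma exp6_lt : Real.exp 6 < 1000 := by
  have h1 : Real.exp 6 = (Real.exp 1) ^ (6:ℕ) := by
    rw [← Real.exp_nat_mul]; norm_num
  have h2 : (Real.exp 1) ^ (6:ℕ) < 2.7182818286 ^ (6:ℕ) :=
    pow_lt_pow_left₀ Real.exp_one_lt_d9 (Real.exp_pos 1).le (by norm_num)
  rw [h1]
  calc ((Real.exp 1) ^ (6:ℕ)) < 2.7182818286 ^ (6:ℕ) := h2
  _ < 1000 := by norm_num

lemma delta2a {x : ℝ} (hx : 0 < x) (h2 : 2 * x ≤ ci) : PhiEx (2 * x) ≤ 1000 * PhiEx x := by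
  have h2x : (0:ℝ) < 2 * x := by linarith
  have hxci : x ≤ ci := by linarith [ci_pos]
  rw [phiEx_eq_phi hx hxci, phiEx_eq_phi h2x h2]
  have hlog2x : Real.log (2 * x) = Real.log 2 + Real.log x :=
    Real.log_mul (by norm_num) hx.ne'
  have hl2 : Real.log (2 * x) ≤ -1 := by
    calc Real.log (2 * x) ≤ Real.log ci := Real.log_le_log h2x h2
    _ = -1 := by rw [ci_eq, Real.log_exp]
  set u : ℝ := -Real.log x with hu_def
  have hlog2_pos : (0:ℝ) < Real.log 2 := Real.log_pos (by norm_num)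
  have hlog2_lt : Real.log 2 < 0.6931471808 := Real.log_two_lt_d9
  have hu1 : 1 + Real.log 2 ≤ u := by
    have : Real.log 2 + Real.log x ≤ -1 := by rw [← hlog2x]; exact hl2
    simp only [hu_def]; linarith
  have hul : 1 ≤ u - Real.log 2 := by linarith
  -- lx values
  have hlx_x : lx x = Real.log u := by rw [lx]
  have hlx_2x : lx (2 * x) = Real.log (u - Real.log 2) := by
    rw [lx, hlog2x, hu_def]; ring_nf
  -- bound on lx difference
  have hdpos : 0 < u - Real.log 2 := by linarith
  have hdiff_nonneg : Real.log (u - Real.log 2) ≤ Real.log u :=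
    Real.log_le_log hdpos (by linarith)
  have hdiff_le : Real.log u - Real.log (u - Real.log 2) ≤ Real.log 2 / (u - Real.log 2) := by
    have h3 : Real.log u - Real.log (u - Real.log 2) = Real.log (u / (u - Real.log 2)) := by
      rw [Real.log_div (by linarith) hdpos.ne']
    rw [h3]
    have := Real.log_le_sub_one_of_pos (div_pos (by linarith : (0:ℝ) < u) hdpos)
    calc Real.log (u / (u - Real.log 2)) ≤ u / (u - Real.log 2) - 1 := this
    _ = Real.log 2 / (u - Real.log 2) := by field_simp; ring
  -- product bound
  have hprod : (Real.log u - Real.log (u - Real.log 2)) * u ≤ 2 := by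
    have h4 : Real.log 2 / (u - Real.log 2) * u ≤ Real.log 2 * (1 + Real.log 2) := by
      rw [div_mul_eq_mul_div, div_le_iff₀ hdpos]
      nlinarith [mul_nonneg (mul_nonneg hlog2_pos.le hlog2_pos.le)
        (by linarith : (0:ℝ) ≤ u - 1 - Real.log 2)]
    have h5 : (Real.log u - Real.log (u - Real.log 2)) * u ≤ Real.log 2 / (u - Real.log 2) * u := by
      apply mul_le_mul_of_nonneg_right hdiff_le (by linarith)
    nlinarith
  -- sin Lipschitz
  have hlip : |Real.sin (lx (2*x)) - Real.sin (lx x)| ≤ |lx (2*x) - lx x| :=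
    sin_lip _ _
  have habs : |lx (2*x) - lx x| = Real.log u - Real.log (u - Real.log 2) := by
    rw [hlx_x, hlx_2x, abs_sub_comm, abs_of_nonneg (by linarith)]
  -- main exponent bound
  have hmain : Real.log (2*x) * g (2*x) ≤ Real.log x * g x + 6 := by
    have e1 : Real.log (2*x) * g (2*x) - Real.log x * g x
        = Real.log 2 * g (2*x) + Real.log x * (g (2*x) - g x) := by
      rw [hlog2x]; ring
    have e2 : g (2*x) - g x = Real.sin (lx (2*x)) - Real.sin (lx x) := by
      rw [g, g]; ring
    have e3 : Real.log x * (g (2*x) - g x) ≤ 2 := by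
      rw [e2]
      have : Real.log x * (Real.sin (lx (2*x)) - Real.sin (lx x))
          ≤ |Real.log x| * |Real.sin (lx (2*x)) - Real.sin (lx x)| := by
        calc Real.log x * (Real.sin (lx (2*x)) - Real.sin (lx x))
            ≤ |Real.log x * (Real.sin (lx (2*x)) - Real.sin (lx x))| := le_abs_self _
        _ = |Real.log x| * |Real.sin (lx (2*x)) - Real.sin (lx x)| := abs_mul _ _
      have habs_logx : |Real.log x| = u := by
        rw [abs_of_nonpos (by simp only [hu_def] at hul hu1 ⊢; linarith)]
      calc Real.log x * (Real.sin (lx (2*x)) - Real.sin (lx x))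
          ≤ |Real.log x| * |Real.sin (lx (2*x)) - Real.sin (lx x)| := this
      _ ≤ u * (Real.log u - Real.log (u - Real.log 2)) := by
          rw [habs_logx]
          exact mul_le_mul_of_nonneg_left (hlip.trans (le_of_eq habs)) (by linarith)
      _ ≤ 2 := by linarith [hprod]
    have e4 : Real.log 2 * g (2*x) ≤ 4 := by
      have := g_le_five (2*x)
      have := g_ge_three (2*x)
      nlinarith
    linarith
  -- conclude
  have hphi2 : phi (2*x) = Real.exp (Real.log (2*x) * g (2*x)) := by
    rw [phi, Real.rpow_def_of_pos h2x]
  have hphix : phi x = Real.exp (Real.log x * g x) := by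
    rw [phi, Real.rpow_def_of_pos hx]
  rw [hphi2, hphix]
  calc Real.exp (Real.log (2*x) * g (2*x)) ≤ Real.exp (Real.log x * g x + 6) :=
      Real.exp_le_exp.mpr hmain
  _ = Real.exp 6 * Real.exp (Real.log x * g x) := by rw [Real.exp_add]; ring
  _ ≤ 1000 * Real.exp (Real.log x * g x) := by
      have := (Real.exp_pos (Real.log x * g x)).le
      nlinarith [exp6_lt]

lemma delta2b {x : ℝ} (hx : 0 < x) (hxci : x ≤ ci) (h2 : ci < 2 * x) :
    PhiEx (2 * x) ≤ 1000 * PhiEx x := by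
  rw [phiEx_eq_phi hx hxci, phiEx_eq_lin h2.le]
  have hx2 : ci / 2 < x := by linarith
  have hx5 : (ci/2) ^ (5:ℝ) ≤ phi x := by
    calc (ci/2) ^ (5:ℝ) ≤ x ^ (5:ℝ) :=
        Real.rpow_le_rpow (by linarith [ci_pos]) hx2.le (by norm_num)
    _ ≤ x ^ (g x) := Real.rpow_le_rpow_of_exponent_ge hx (hxci.trans ci_lt_one.le) (g_le_five x)
  have hci5 : (ci/2) ^ (5:ℝ) = Real.exp (-5) / 32 := by
    have h1 : Real.exp (-1) ^ (5:ℝ) = Real.exp (-5) := by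
      rw [Real.rpow_def_of_pos (Real.exp_pos _), Real.log_exp]; norm_num
    have h2 : (2:ℝ) ^ (5:ℝ) = 32 := by
      rw [show (5:ℝ) = ((5:ℕ):ℝ) by norm_num, Real.rpow_natCast]; norm_num
    rw [ci_eq, Real.div_rpow (Real.exp_pos _).le (by norm_num), h1, h2]
  have hlin : lin (2*x) ≤ 10 * Real.exp (-4) := by
    rw [lin]
    have : x ≤ Real.exp (-1) := by rw [← ci_eq]; exact hxci
    have hprod : Real.exp (-3) * Real.exp (-1) = Real.exp (-4) := by
      rw [← Real.exp_add]; norm_num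
    nlinarith [Real.exp_pos (-3:ℝ), Real.exp_pos (-4:ℝ)]
  have hkey : 10 * Real.exp (-4) ≤ 1000 * (Real.exp (-5) / 32) := by
    have hprod : Real.exp (-4) = Real.exp 1 * Real.exp (-5) := by
      rw [← Real.exp_add]; norm_num
    nlinarith [Real.exp_pos (-5:ℝ), Real.exp_one_lt_d9]
  calc lin (2*x) ≤ 10 * Real.exp (-4) := hlin
  _ ≤ 1000 * (Real.exp (-5) / 32) := hkey
  _ = 1000 * ((ci/2) ^ (5:ℝ)) := by rw [hci5]
  _ ≤ 1000 * phi x := by nlinarith [hx5]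

lemma delta2c {x : ℝ} (hci : ci < x) : PhiEx (2 * x) ≤ 1000 * PhiEx x := by
  have h2 : ci ≤ 2 * x := by nlinarith [ci_pos]
  rw [phiEx_eq_lin hci.le, phiEx_eq_lin h2, lin, lin]
  have hx : Real.exp (-1) ≤ x := by rw [← ci_eq]; exact hci.le
  have hprod : Real.exp (-3) * Real.exp (-1) = Real.exp (-4) := by
    rw [← Real.exp_add]; norm_num
  nlinarith [Real.exp_pos (-3:ℝ), Real.exp_pos (-4:ℝ)]

lemma delta2 : ∀ x : ℝ, 0 < x → PhiEx (2 * x) ≤ 1000 * PhiEx x := by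
  intro x hx
  rcases le_or_gt (2*x) ci with h | h
  · exact delta2a hx h
  · rcases le_or_gt x ci with h' | h'
    · exact delta2b hx h' h
    · exact delta2c h'




section seq
variable (ε : ℝ)  -- ε = -π/2 or π/2

def aseq (ε : ℝ) (k : ℕ) : ℝ := ((k:ℝ) + 1) * (2 * Real.pi) + ε
def useq (ε : ℝ) (k : ℕ) : ℝ := Real.exp (aseq ε k)
def xseq (ε : ℝ) (k : ℕ) : ℝ := Real.exp (-(useq ε k))

lemma aseq_nonneg (hε : -Real.pi/2 ≤ ε) (k : ℕ) : 0 ≤ aseq ε k := by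
  have hπ := Real.pi_gt_three
  have h0 : (0:ℝ) ≤ (k:ℝ) := Nat.cast_nonneg k
  have : (1:ℝ) ≤ (k:ℝ) + 1 := by linarith
  rw [aseq]; nlinarith

lemma useq_ge_one (hε : -Real.pi/2 ≤ ε) (k : ℕ) : 1 ≤ useq ε k :=
  Real.one_le_exp (aseq_nonneg ε hε k)

lemma xseq_pos (k : ℕ) : 0 < xseq ε k := Real.exp_pos _
lemma xseq_le_ci (hε : -Real.pi/2 ≤ ε) (k : ℕ) : xseq ε k ≤ ci := by
  rw [xseq, ci_eq]
  exact Real.exp_le_exp.mpr (by linarith [useq_ge_one ε hε k])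

lemma log_xseq (k : ℕ) : Real.log (xseq ε k) = -(useq ε k) := by
  rw [xseq, Real.log_exp]

lemma lx_xseq (k : ℕ) : lx (xseq ε k) = aseq ε k := by
  rw [lx, log_xseq, neg_neg, useq, Real.log_exp]

lemma sin_aseq_neg (k : ℕ) : Real.sin (aseq (-(Real.pi/2)) k) = -1 := by
  have : aseq (-(Real.pi/2)) k = ((k+1 : ℕ):ℝ) * (2 * Real.pi) - Real.pi/2 := by
    rw [aseq]; push_cast; ring
  rw [this, Real.sin_sub_pi_div_two, Real.cos_nat_mul_two_pi]

lemma sin_aseq_pos (k : ℕ) : Real.sin (aseq (Real.pi/2) k) = 1 := by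
  have : aseq (Real.pi/2) k = ((k+1 : ℕ):ℝ) * (2 * Real.pi) + Real.pi/2 := by
    rw [aseq]; push_cast; ring
  rw [this, Real.sin_add_pi_div_two, Real.cos_nat_mul_two_pi]

lemma tendsto_aseq : Tendsto (aseq ε) atTop atTop := by
  have h1 : Tendsto (fun k : ℕ => ((k:ℝ) + 1)) atTop atTop :=
    tendsto_atTop_add_const_right _ 1 tendsto_natCast_atTop_atTop
  have h2 : Tendsto (fun k : ℕ => ((k:ℝ) + 1) * (2 * Real.pi)) atTop atTop :=
    h1.atTop_mul_const (by linarith [Real.pi_pos])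
  exact tendsto_atTop_add_const_right _ ε h2

lemma tendsto_useq : Tendsto (useq ε) atTop atTop := by
  have := Real.tendsto_exp_atTop.comp (tendsto_aseq ε)
  exact this

lemma tendsto_xseq : Tendsto (xseq ε) atTop (𝓝[>] (0:ℝ)) := by
  apply tendsto_nhdsWithin_of_tendsto_nhds_of_eventually_within
  · exact Real.tendsto_exp_atBot.comp ((tendsto_neg_atTop_atBot).comp (tendsto_useq ε))
  · exact Eventually.of_forall fun k => xseq_pos ε k

end seq

lemma freq1 {q : ℝ} (hq : q ∈ Ioo (3:ℝ) 5) (M : ℝ) :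
    ∃ᶠ x in 𝓝[>] (0:ℝ), M < PhiEx x / x ^ q := by
  set ε : ℝ := -(Real.pi/2)
  have hε : -Real.pi/2 ≤ ε := by rw [show ε = -(Real.pi/2) from rfl]; linarith
  have hratio : ∀ k, PhiEx (xseq ε k) / (xseq ε k) ^ q
      = Real.exp ((q - 3) * useq ε k) := by
    intro k
    rw [phiEx_eq_phi (xseq_pos ε k) (xseq_le_ci ε hε k), phi,
      Real.rpow_def_of_pos (xseq_pos ε k), Real.rpow_def_of_pos (xseq_pos ε k),
      log_xseq, g, lx_xseq, sin_aseq_neg, ← Real.exp_sub]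
    ring_nf
  have h3 : Tendsto (fun k => Real.exp ((q - 3) * useq ε k)) atTop atTop :=
    Real.tendsto_exp_atTop.comp ((tendsto_useq ε).const_mul_atTop (by linarith [hq.1]))
  have hev : ∀ᶠ k in atTop, M < PhiEx (xseq ε k) / (xseq ε k) ^ q := by
    filter_upwards [h3.eventually_gt_atTop M] with k hk
    rw [hratio k]; exact hk
  exact (tendsto_xseq ε).frequently hev.frequently

lemma freq2 {q : ℝ} (hq : q ∈ Ioo (3:ℝ) 5) (M : ℝ) :
    ∃ᶠ x in 𝓝[>] (0:ℝ), M < x ^ q / PhiEx x := by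
  set ε : ℝ := Real.pi/2
  have hε : -Real.pi/2 ≤ ε := by
    have := Real.pi_pos; rw [show ε = Real.pi/2 from rfl]; linarith
  have hratio : ∀ k, (xseq ε k) ^ q / PhiEx (xseq ε k)
      = Real.exp ((5 - q) * useq ε k) := by
    intro k
    rw [phiEx_eq_phi (xseq_pos ε k) (xseq_le_ci ε hε k), phi,
      Real.rpow_def_of_pos (xseq_pos ε k), Real.rpow_def_of_pos (xseq_pos ε k),
      log_xseq, g, lx_xseq, sin_aseq_pos, ← Real.exp_sub]
    ring_nf
  have h3 : Tendsto (fun k => Real.exp ((5 - q) * useq ε k)) atTop atTop :=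
    Real.tendsto_exp_atTop.comp ((tendsto_useq ε).const_mul_atTop (by linarith [hq.2]))
  have hev : ∀ᶠ k in atTop, M < (xseq ε k) ^ q / PhiEx (xseq ε k) := by
    filter_upwards [h3.eventually_gt_atTop M] with k hk
    rw [hratio k]; exact hk
  exact (tendsto_xseq ε).frequently hev.frequently


end S19

/-- `PhiEx` is a Young function in `Δ₂` which oscillates between the powers `x³`
and `x⁵` near zero, hence is incomparable at `0` with `x^q` for every `q ∈ (3,5)`. -/
theorem stmt19 :
    ConvexOn ℝ (Ici 0) PhiEx ∧
    StrictMonoOn PhiEx (Ici 0) ∧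
    (∃ C : ℝ, 0 < C ∧ ∀ x : ℝ, 0 < x → PhiEx (2 * x) ≤ C * PhiEx x) ∧
    (∀ q : ℝ, q ∈ Ioo (3:ℝ) 5 →
      (∀ M : ℝ, ∃ᶠ x in 𝓝[>] (0:ℝ), M < PhiEx x / x ^ q) ∧
      (∀ M : ℝ, ∃ᶠ x in 𝓝[>] (0:ℝ), M < x ^ q / PhiEx x)) :=
  ⟨S19.convexPhiEx, S19.strictMonoPhiEx, ⟨1000, by norm_num, S19.delta2⟩,
    fun _ hq => ⟨S19.freq1 hq, S19.freq2 hq⟩⟩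
end
end
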